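/- arXiv:1810.12980 — 6 statements merged into one kernel-verified Lean document; each statement's English description precedes it below -/
import Mathlib

section
/- Suppose real numbers p₁, p₂, p₃, p₇ satisfy 1 = p₁ ≥ p₂ ≥ p₃ ≥ p₇ ≥ 0, and let λ be a real number such that p₁ + p₂ - 2p₃ - min(p₁ - p₂, p₂ - p₃) ≤ -1 + λ and 2p₁ + 5p₃ - min(p₁ - p₃, p₃ - p₇) ≤ -1 + 2λ. Then λ ≥ 11/6. -/
theorem stmt_7 (p₁ p₂ p₃ p₇ lam : ℝ)
    (h1 : p₁ = 1) (h12 : p₂ ≤ p₁) (h23 : p₃ ≤ p₂) (h37 : p₇ ≤ p₃) (h70 : 0 ≤ p₇)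
    (hc1 : p₁ + p₂ - 2 * p₃ - min (p₁ - p₂) (p₂ - p₃) ≤ -1 + lam)
    (hc2 : 2 * p₁ + 5 * p₃ - min (p₁ - p₃) (p₃ - p₇) ≤ -1 + 2 * lam) :
    11/6 ≤ lam := by
  rcases min_cases (p₁ - p₂) (p₂ - p₃) with ⟨e1, _⟩ | ⟨e1, _⟩ <;>
  rcases min_cases (p₁ - p₃) (p₃ - p₇) with ⟨e2, _⟩ | ⟨e2, _⟩ <;>
  rw [e1] at hc1 <;> rw [e2] at hc2 <;> linarith
end

section
/- The optimal value of Linear Program 3 is exactly 11/6: there exist real numbers 1 = p₁ ≥ p₂ ≥ p₃ ≥ p₇ ≥ 0 satisfying both constraints with λ = 11/6 (e.g. p₂ = 13/42, p₃ = 1/6, p₇ = 0), and no such numbers exist for any λ < 11/6. -/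
theorem stmt_8 :
    (∃ p₁ p₂ p₃ p₇ : ℝ, p₁ = 1 ∧ p₂ ≤ p₁ ∧ p₃ ≤ p₂ ∧ p₇ ≤ p₃ ∧ 0 ≤ p₇ ∧
      p₁ + p₂ - 2 * p₃ - min (p₁ - p₂) (p₂ - p₃) ≤ -1 + 11/6 ∧
      2 * p₁ + 5 * p₃ - min (p₁ - p₃) (p₃ - p₇) ≤ -1 + 2 * (11/6)) ∧
    (∀ lam : ℝ, lam < 11/6 →
      ¬ ∃ p₁ p₂ p₃ p₇ : ℝ, p₁ = 1 ∧ p₂ ≤ p₁ ∧ p₃ ≤ p₂ ∧ p₇ ≤ p₃ ∧ 0 ≤ p₇ ∧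
        p₁ + p₂ - 2 * p₃ - min (p₁ - p₂) (p₂ - p₃) ≤ -1 + lam ∧
        2 * p₁ + 5 * p₃ - min (p₁ - p₃) (p₃ - p₇) ≤ -1 + 2 * lam) := by
  constructor
  · refine ⟨1, 13/42, 1/6, 0, rfl, by norm_num, by norm_num, by norm_num, le_refl 0, ?_, ?_⟩
    · have : min ((1:ℝ) - 13/42) (13/42 - 1/6) = 1/7 := by norm_num [min_def]
      rw [this]; norm_num
    · have : min ((1:ℝ) - 1/6) (1/6 - 0) = 1/6 := by norm_num [min_def]
      rw [this]; norm_num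
  · rintro lam hlam ⟨p₁, p₂, p₃, p₇, h1, h2, h3, h4, h5, hc1, hc2⟩
    subst h1
    have m1 : min (1 - p₂) (p₂ - p₃) ≤ p₂ - p₃ := min_le_right _ _
    have m2 : min (1 - p₃) (p₃ - p₇) ≤ p₃ - p₇ := min_le_right _ _
    linarith
end

section
/- With Vigoda's flip parameters, for all natural numbers a, b ≥ 1: a·p_a + b·p_b - min(p_a, p_b) ≤ 4/3. Consequently for any m ≥ 3 and any sequence of pairs (a_i, b_i) with a_i, b_i ≥ 1, the sum Σ_{i=1}^m (a_i p_{a_i} + b_i p_{b_i} - min(p_{a_i}, p_{b_i})) ≤ (4/3)·m. -/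
def vigodaP : ℕ → ℚ
  | 0 => 0
  | 1 => 1
  | 2 => 13/42
  | 3 => 1/6
  | 4 => 2/21
  | 5 => 1/21
  | 6 => 1/84
  | _ => 0

lemma vigodaP_zero_of_ge (n : ℕ) (hn : 7 ≤ n) : vigodaP n = 0 := by
  match n, hn with
  | (k+7), _ => rfl

lemma vigodaP_nonneg (n : ℕ) : 0 ≤ vigodaP n := by
  rcases lt_or_ge n 7 with h | h
  · interval_cases n <;> norm_num [vigodaP]
  · rw [vigodaP_zero_of_ge n h]

lemma vigodaP_mul_le (n : ℕ) : (n : ℚ) * vigodaP n ≤ 1 := by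
  rcases lt_or_ge n 7 with h | h
  · interval_cases n <;> norm_num [vigodaP]
  · rw [vigodaP_zero_of_ge n h]; norm_num

lemma key (a b : ℕ) (ha : 1 ≤ a) (hb : 1 ≤ b) :
    (a : ℚ) * vigodaP a + (b : ℚ) * vigodaP b - min (vigodaP a) (vigodaP b) ≤ 4/3 := by
  rcases lt_or_ge a 7 with h1 | h1 <;> rcases lt_or_ge b 7 with h2 | h2
  · interval_cases a <;> interval_cases b <;> norm_num [vigodaP]
  · rw [vigodaP_zero_of_ge b h2]
    have := vigodaP_mul_le a
    have := vigodaP_nonneg a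
    rw [min_eq_right (by assumption)]
    push_cast
    linarith
  · rw [vigodaP_zero_of_ge a h1]
    have := vigodaP_mul_le b
    have := vigodaP_nonneg b
    rw [min_eq_left (by assumption)]
    push_cast
    linarith
  · rw [vigodaP_zero_of_ge a h1, vigodaP_zero_of_ge b h2]
    norm_num

theorem stmt_10 :
    (∀ a b : ℕ, 1 ≤ a → 1 ≤ b →
      (a : ℚ) * vigodaP a + (b : ℚ) * vigodaP b - min (vigodaP a) (vigodaP b) ≤ 4/3) ∧
    (∀ m : ℕ, 3 ≤ m → ∀ a b : Fin m → ℕ, (∀ i, 1 ≤ a i) → (∀ i, 1 ≤ b i) →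
      ∑ i, ((a i : ℚ) * vigodaP (a i) + (b i : ℚ) * vigodaP (b i) -
        min (vigodaP (a i)) (vigodaP (b i))) ≤ (4/3) * m) := by
  refine ⟨key, ?_⟩
  intro m _ a b ha hb
  calc ∑ i, ((a i : ℚ) * vigodaP (a i) + (b i : ℚ) * vigodaP (b i) -
        min (vigodaP (a i)) (vigodaP (b i)))
      ≤ ∑ _i : Fin m, (4/3 : ℚ) :=
        Finset.sum_le_sum fun i _ => key (a i) (b i) (ha i) (hb i)
    _ = (4/3) * m := by simp [Finset.sum_const, mul_comm]
end

section
/- With Vigoda's flip parameters, for all natural numbers a₁, a₂ ≥ 1 with A = a₁ + a₂ + 1: (a₁ - 1)p_{a₁} + (a₂ - 1)p_{a₂} + (A - 2·max(a₁,a₂))·p_A ≤ 2/3, with equality if and only if a₁ = a₂ ∈ {2,3}. -/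
lemma vigodaP_ge7 : ∀ n, 7 ≤ n → vigodaP n = 0
  | _+7, _ => rfl

lemma bnd : ∀ a : ℕ, ((a : ℚ) - 1) * vigodaP a ≤ 1/3 := by
  intro a
  rcases le_or_gt a 6 with h | h
  · interval_cases a <;> norm_num [vigodaP]
  · rw [vigodaP_ge7 a (by omega)]; norm_num

theorem stmt_12 : ∀ a₁ a₂ : ℕ, 1 ≤ a₁ → 1 ≤ a₂ →
    (((a₁ : ℚ) - 1) * vigodaP a₁ + ((a₂ : ℚ) - 1) * vigodaP a₂ +
        (((a₁ + a₂ + 1 : ℕ) : ℚ) - 2 * (max a₁ a₂ : ℕ)) * vigodaP (a₁ + a₂ + 1) ≤ 2/3) ∧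
    (((a₁ : ℚ) - 1) * vigodaP a₁ + ((a₂ : ℚ) - 1) * vigodaP a₂ +
        (((a₁ + a₂ + 1 : ℕ) : ℚ) - 2 * (max a₁ a₂ : ℕ)) * vigodaP (a₁ + a₂ + 1) = 2/3 ↔
      a₁ = a₂ ∧ (a₁ = 2 ∨ a₁ = 3)) := by
  intro a₁ a₂ h1 h2
  rcases le_or_gt a₁ 6 with ha | ha
  · rcases le_or_gt a₂ 6 with hb | hb
    · interval_cases a₁ <;> interval_cases a₂ <;> norm_num [vigodaP]
    · rw [vigodaP_ge7 a₂ (by omega), vigodaP_ge7 (a₁+a₂+1) (by omega)]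
      have := bnd a₁
      constructor
      · linarith
      · constructor
        · intro h; linarith
        · rintro ⟨rfl, h | h⟩ <;> omega
  · rw [vigodaP_ge7 a₁ (by omega), vigodaP_ge7 (a₁+a₂+1) (by omega)]
    have := bnd a₂
    constructor
    · linarith
    · constructor
      · intro h; linarith
      · rintro ⟨rfl, h | h⟩ <;> omega
end

section
/- For m = 1, with Vigoda's flip parameters, the quantity max(a₁(p_{a₁} - p_{a₁+1}) + (b₁-1)(p_{b₁} - p_{b₁+1}), (a₁-1)(p_{a₁} - p_{a₁+1}) + b₁(p_{b₁} - p_{b₁+1})) is at most 5/6 for all natural numbers a₁, b₁ ≥ 1, with equality if and only if (a₁ = 1 and b₁ ∈ {2,3,4,5}) or (b₁ = 1 and a₁ ∈ {2,3,4,5}). -/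
lemma vig0 (n : ℕ) (h : 7 ≤ n) : vigodaP n = 0 := by
  rcases n with _|_|_|_|_|_|_|m <;> first | omega | rfl

theorem stmt_14 : ∀ a₁ b₁ : ℕ, 1 ≤ a₁ → 1 ≤ b₁ →
    (max ((a₁ : ℚ) * (vigodaP a₁ - vigodaP (a₁ + 1)) +
          ((b₁ : ℚ) - 1) * (vigodaP b₁ - vigodaP (b₁ + 1)))
        (((a₁ : ℚ) - 1) * (vigodaP a₁ - vigodaP (a₁ + 1)) +
          (b₁ : ℚ) * (vigodaP b₁ - vigodaP (b₁ + 1))) ≤ 5/6) ∧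
    (max ((a₁ : ℚ) * (vigodaP a₁ - vigodaP (a₁ + 1)) +
          ((b₁ : ℚ) - 1) * (vigodaP b₁ - vigodaP (b₁ + 1)))
        (((a₁ : ℚ) - 1) * (vigodaP a₁ - vigodaP (a₁ + 1)) +
          (b₁ : ℚ) * (vigodaP b₁ - vigodaP (b₁ + 1))) = 5/6 ↔
      (a₁ = 1 ∧ b₁ ∈ ({2, 3, 4, 5} : Set ℕ)) ∨ (b₁ = 1 ∧ a₁ ∈ ({2, 3, 4, 5} : Set ℕ))) := by
  intro a b ha hb
  rcases le_or_gt a 7 with hA | hA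
  · rcases le_or_gt b 7 with hB | hB
    · interval_cases a <;> interval_cases b <;>
        norm_num [vigodaP, Set.mem_insert_iff, Set.mem_singleton_iff]
    · have h1 : vigodaP b = 0 := vig0 _ (by omega)
      have h2 : vigodaP (b+1) = 0 := vig0 _ (by omega)
      rw [h1, h2]
      have hb2 : b ≠ 1 ∧ b ≠ 2 ∧ b ≠ 3 ∧ b ≠ 4 ∧ b ≠ 5 := by omega
      interval_cases a <;>
        simp [vigodaP, Set.mem_insert_iff, Set.mem_singleton_iff, hb2.1, hb2.2.1,
          hb2.2.2.1, hb2.2.2.2.1, hb2.2.2.2.2] <;> norm_num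
  · have h1 : vigodaP a = 0 := vig0 _ (by omega)
    have h2 : vigodaP (a+1) = 0 := vig0 _ (by omega)
    rw [h1, h2]
    have ha2 : a ≠ 1 ∧ a ≠ 2 ∧ a ≠ 3 ∧ a ≠ 4 ∧ a ≠ 5 := by omega
    rcases le_or_gt b 7 with hB | hB
    · interval_cases b <;>
        simp [vigodaP, Set.mem_insert_iff, Set.mem_singleton_iff, ha2.1, ha2.2.1,
          ha2.2.2.1, ha2.2.2.2.1, ha2.2.2.2.2] <;> norm_num
    · have h3 : vigodaP b = 0 := vig0 _ (by omega)
      have h4 : vigodaP (b+1) = 0 := vig0 _ (by omega)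
      rw [h3, h4]
      have hb2 : b ≠ 1 := by omega
      simp [ha2.1, hb2]; norm_num
end

section
/- For any non-increasing sequence of real numbers 1 = p₁ ≥ p₂ ≥ ⋯ ≥ p₇ ≥ 0, at least one of p₁ + p₂ - 2p₃ - min(p₁-p₂, p₂-p₃) ≥ -1 + (11/6) or 2p₁ + 5p₃ - min(p₁-p₃, p₃-p₇) ≥ -1 + 2·(11/6) holds; hence if λ < 11/6 then at least one of p₁+p₂-2p₃-min(p₁-p₂,p₂-p₃) > -1+λ or 2p₁+5p₃-min(p₁-p₃,p₃-p₇) > -1+2λ holds. -/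
theorem stmt_16 (p₁ p₂ p₃ p₄ p₅ p₆ p₇ : ℝ)
    (h1 : p₁ = 1) (h12 : p₂ ≤ p₁) (h23 : p₃ ≤ p₂) (h34 : p₄ ≤ p₃) (h45 : p₅ ≤ p₄)
    (h56 : p₆ ≤ p₅) (h67 : p₇ ≤ p₆) (h70 : 0 ≤ p₇) :
    ((-1 + 11/6 ≤ p₁ + p₂ - 2 * p₃ - min (p₁ - p₂) (p₂ - p₃)) ∨
      (-1 + 2 * (11/6) ≤ 2 * p₁ + 5 * p₃ - min (p₁ - p₃) (p₃ - p₇))) ∧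
    (∀ lam : ℝ, lam < 11/6 →
      (p₁ + p₂ - 2 * p₃ - min (p₁ - p₂) (p₂ - p₃) > -1 + lam) ∨
      (2 * p₁ + 5 * p₃ - min (p₁ - p₃) (p₃ - p₇) > -1 + 2 * lam)) := by
  have key : ((-1 + 11/6 ≤ p₁ + p₂ - 2 * p₃ - min (p₁ - p₂) (p₂ - p₃)) ∨
      (-1 + 2 * (11/6) ≤ 2 * p₁ + 5 * p₃ - min (p₁ - p₃) (p₃ - p₇))) := by
    by_contra h
    push_neg at h
    obtain ⟨hA, hB⟩ := h
    rcases le_total (p₁ - p₂) (p₂ - p₃) with h1' | h1' <;>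
      rcases le_total (p₁ - p₃) (p₃ - p₇) with h2' | h2'
    · rw [min_eq_left h1'] at hA; rw [min_eq_left h2'] at hB; linarith
    · rw [min_eq_left h1'] at hA; rw [min_eq_right h2'] at hB; linarith
    · rw [min_eq_right h1'] at hA; rw [min_eq_left h2'] at hB; linarith
    · rw [min_eq_right h1'] at hA; rw [min_eq_right h2'] at hB; linarith
  refine ⟨key, fun lam hlam => ?_⟩
  rcases key with h | h
  · left; linarith
  · right; linarith
end
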